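/- Let G be a finite graph with symmetric edge weights and Ω a finite subset of vertices with Ω̃ connected. Let δ_I Ω = {x ∈ Ω : x ∼ y for some y ∈ δΩ} and define the linear operator Q : ℝ^{δΩ} → ℝ^{δ_I Ω} by Qφ(x) = (1/m_x) Σ_{y∈δΩ} μ_{xy} φ(y) for x ∈ δ_I Ω. Then the eigenspace E_1(Λ) = {φ : δΩ → ℝ : Λφ = φ} of the Dirichlet-to-Neumann operator for the eigenvalue 1 equals the kernel of Q. -/

import Mathlib

open scoped Classical
open Finset

variable {V : Type*} [Fintype V]

/-- The vertex boundary δΩ of a finite set Ω of vertices. -/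
noncomputable def bdry (μ : V → V → ℝ) (Ω : Finset V) : Finset V :=
  Finset.univ.filter fun x => x ∉ Ω ∧ ∃ y ∈ Ω, 0 < μ x y

/-- Ω̄ = Ω ∪ δΩ. -/
noncomputable def clos (μ : V → V → ℝ) (Ω : Finset V) : Finset V :=
  Ω ∪ bdry μ Ω

/-- The vertex measure m on Ω̄. -/
noncomputable def vm (μ : V → V → ℝ) (Ω : Finset V) (x : V) : ℝ :=
  if x ∈ Ω then ∑ y, μ x y else ∑ y ∈ Ω, μ x y

/-- m(B) = Σ_{x ∈ B} m_x. -/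
noncomputable def msum (μ : V → V → ℝ) (Ω : Finset V) (B : Finset V) : ℝ :=
  ∑ x ∈ B, vm μ Ω x

/-- Sum over the edges e = {x,y} of E(Ω,Ω̄) of μ_{xy} · F x y (for symmetric F). -/
noncomputable def edgeSum (μ : V → V → ℝ) (Ω : Finset V) (F : V → V → ℝ) : ℝ :=
  (∑ x ∈ Ω, ∑ y ∈ Ω, μ x y * F x y) / 2 +
    ∑ x ∈ Ω, ∑ y ∈ bdry μ Ω, μ x y * F x y

/-- Dirichlet energy D_Ω(f). -/
noncomputable def dirichlet (μ : V → V → ℝ) (Ω : Finset V) (f : V → ℝ) : ℝ :=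
  edgeSum μ Ω fun x y => (f x - f y) ^ 2

/-- Dirichlet form D_Ω(f,g). -/
noncomputable def dform (μ : V → V → ℝ) (Ω : Finset V) (f g : V → ℝ) : ℝ :=
  edgeSum μ Ω fun x y => (f x - f y) * (g x - g y)

/-- μ(∂_Ω A): total weight of the edges of E(Ω,Ω̄) with exactly one endpoint in A. -/
noncomputable def cut (μ : V → V → ℝ) (Ω : Finset V) (A : Finset V) : ℝ :=
  edgeSum μ Ω fun x y => if (x ∈ A) ↔ (y ∈ A) then 0 else 1

/-- The graph Laplacian Δf(x) (used for x ∈ Ω). -/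
noncomputable def lap (μ : V → V → ℝ) (Ω : Finset V) (f : V → ℝ) (x : V) : ℝ :=
  (∑ y, μ x y * (f y - f x)) / vm μ Ω x

/-- The outward normal derivative ∂f/∂n(z) (used for z ∈ δΩ). -/
noncomputable def nderiv (μ : V → V → ℝ) (Ω : Finset V) (f : V → ℝ) (z : V) : ℝ :=
  (∑ x ∈ Ω, μ z x * (f z - f x)) / vm μ Ω z

/-- f is harmonic on Ω. -/
def IsHarmonic (μ : V → V → ℝ) (Ω : Finset V) (u : V → ℝ) : Prop :=
  ∀ x ∈ Ω, lap μ Ω u x = 0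

/-- Adjacency in the graph Ω̃ = (Ω̄, E(Ω,Ω̄)). -/
def tilAdj (μ : V → V → ℝ) (Ω : Finset V) (x y : V) : Prop :=
  0 < μ x y ∧ (x ∈ Ω ∨ y ∈ Ω)

/-- The graph Ω̃ is connected. -/
def TilConnected (μ : V → V → ℝ) (Ω : Finset V) : Prop :=
  ∀ x ∈ clos μ Ω, ∀ y ∈ clos μ Ω, Relation.ReflTransGen (tilAdj μ Ω) x y

/-- λ₁(Ω): the first nontrivial eigenvalue of the Dirichlet-to-Neumann operator,
characterized by its Rayleigh quotient. -/
noncomputable def lambda1 (μ : V → V → ℝ) (Ω : Finset V) : ℝ :=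
  sInf { r : ℝ | ∃ u : V → ℝ, IsHarmonic μ Ω u ∧
    (∑ x ∈ bdry μ Ω, u x ^ 2 * vm μ Ω x) = 1 ∧
    (∑ x ∈ bdry μ Ω, u x * vm μ Ω x) = 0 ∧
    r = dirichlet μ Ω u }

/-- The Escobar-type Cheeger constant h_E(Ω̃). -/
noncomputable def hE (μ : V → V → ℝ) (Ω : Finset V) : ℝ :=
  sInf { r : ℝ | ∃ A : Finset V, A ⊆ clos μ Ω ∧
    0 < msum μ Ω (A ∩ bdry μ Ω) ∧
    msum μ Ω (A ∩ bdry μ Ω) ≤ msum μ Ω (bdry μ Ω) / 2 ∧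
    r = cut μ Ω A / msum μ Ω (A ∩ bdry μ Ω) }

/-- The Jammes-type Cheeger constant h_J(Ω̃). -/
noncomputable def hJ (μ : V → V → ℝ) (Ω : Finset V) : ℝ :=
  sInf { r : ℝ | ∃ A : Finset V, A ⊆ clos μ Ω ∧
    (A ∩ bdry μ Ω).Nonempty ∧
    msum μ Ω A ≤ msum μ Ω (clos μ Ω) / 2 ∧
    r = cut μ Ω A / msum μ Ω (A ∩ bdry μ Ω) }

/-- The classical Cheeger constant h(Ω̃). -/
noncomputable def cheeger (μ : V → V → ℝ) (Ω : Finset V) : ℝ :=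
  sInf { r : ℝ | ∃ A : Finset V, A ⊆ clos μ Ω ∧ A.Nonempty ∧
    msum μ Ω A ≤ msum μ Ω (clos μ Ω) / 2 ∧
    r = cut μ Ω A / msum μ Ω A }

/-- δ_IΩ = {x ∈ Ω : x ∼ y for some y ∈ δΩ}. -/
noncomputable def bdryI (μ : V → V → ℝ) (Ω : Finset V) : Finset V :=
  Ω.filter fun x => ∃ y ∈ bdry μ Ω, 0 < μ x y

/-
If `u` is harmonic on `Ω`, then `Σ_{x∈Ω} u(x) Σ_y μ_{xy} (u(y) - u(x)) = 0`; symmetrizing the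
interior part of this sum gives

  `½ Σ_{x,y∈Ω} μ_{xy} (u(x) - u(y))² + Σ_{x∈Ω,y∈δΩ} μ_{xy} u(x)² = Σ_{x∈Ω,y∈δΩ} μ_{xy} u(x) u(y)`.

Each of `Λφ = φ` and `Qφ = 0` forces the right-hand side to vanish (the first after summing
over `y ∈ δΩ`, the second after summing over `x ∈ Ω`), so `u` is constant along interior edges
and vanishes at every interior vertex with a boundary neighbour; by connectedness of `Ω̃`,
`u = 0` on `Ω`. Conversely `u = 0` on `Ω` gives both `Λφ = φ` and, by harmonicity, `Qφ = 0`.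
-/

lemma sum_sum_eq_zero_iff_of_nonneg {α β M : Type*} [AddCommMonoid M] [PartialOrder M]
    [IsOrderedAddMonoid M] {s : Finset α} {t : Finset β} {f : α → β → M}
    (hf : ∀ x ∈ s, ∀ y ∈ t, 0 ≤ f x y) :
    ∑ x ∈ s, ∑ y ∈ t, f x y = 0 ↔ ∀ x ∈ s, ∀ y ∈ t, f x y = 0 := by
  rw [sum_eq_zero_iff_of_nonneg fun x hx => sum_nonneg (hf x hx)]
  exact forall₂_congr fun x hx => sum_eq_zero_iff_of_nonneg (hf x hx)

section Graph

variable {μ : V → V → ℝ} {Ω : Finset V}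

lemma mem_bdry {x : V} : x ∈ bdry μ Ω ↔ x ∉ Ω ∧ ∃ y ∈ Ω, 0 < μ x y := by
  simp [bdry]

lemma notMem_of_mem_bdry {x : V} (hx : x ∈ bdry μ Ω) : x ∉ Ω :=
  (mem_bdry.mp hx).1

lemma mem_bdry_of_pos (hsym : ∀ x y, μ x y = μ y x) {x y : V} (hx : x ∈ Ω) (hy : y ∉ Ω)
    (hxy : 0 < μ x y) : y ∈ bdry μ Ω :=
  mem_bdry.mpr ⟨hy, x, hx, hsym x y ▸ hxy⟩

lemma vm_of_mem_bdry {z : V} (hz : z ∈ bdry μ Ω) : vm μ Ω z = ∑ x ∈ Ω, μ z x := by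
  rw [vm, if_neg (notMem_of_mem_bdry hz)]

/-- The neighbours of an interior vertex lie in `Ω̄`. -/
lemma sum_eq_sum_add_sum_bdry (hsym : ∀ x y, μ x y = μ y x) (hnn : ∀ x y, 0 ≤ μ x y)
    {x : V} (hx : x ∈ Ω) (f : V → ℝ) :
    ∑ y, μ x y * f y = ∑ y ∈ Ω, μ x y * f y + ∑ y ∈ bdry μ Ω, μ x y * f y := by
  have hdisj : Disjoint Ω (bdry μ Ω) :=
    disjoint_left.mpr fun _ ha hab => notMem_of_mem_bdry hab ha
  rw [← sum_union hdisj]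
  refine (sum_subset (subset_univ _) fun y _ hy => ?_).symm
  obtain ⟨hyΩ, hyb⟩ := not_or.mp (mem_union.not.mp hy)
  have hxy : μ x y = 0 :=
    le_antisymm (not_lt.mp fun hpos => hyb (mem_bdry_of_pos hsym hx hyΩ hpos)) (hnn x y)
  rw [hxy, zero_mul]

lemma sum_bdry_eq_zero_of_notMem_bdryI (hnn : ∀ x y, 0 ≤ μ x y) {x : V} (hx : x ∈ Ω)
    (hxI : x ∉ bdryI μ Ω) (f : V → ℝ) : ∑ y ∈ bdry μ Ω, μ x y * f y = 0 := by
  refine sum_eq_zero fun y hy => ?_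
  have hxy : μ x y = 0 :=
    le_antisymm (not_lt.mp fun hpos => hxI (mem_filter.mpr ⟨hx, y, hy, hpos⟩)) (hnn x y)
  rw [hxy, zero_mul]

lemma nderiv_of_mem_bdry (u : V → ℝ) {z : V} (hz : z ∈ bdry μ Ω) (hmz : vm μ Ω z ≠ 0) :
    nderiv μ Ω u z = u z - (∑ x ∈ Ω, μ z x * u x) / vm μ Ω z := by
  have hnum : ∑ x ∈ Ω, μ z x * (u z - u x) = vm μ Ω z * u z - ∑ x ∈ Ω, μ z x * u x := by
    rw [vm_of_mem_bdry hz, sum_mul, ← sum_sub_distrib]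
    exact sum_congr rfl fun x _ => by ring
  rw [nderiv, hnum, sub_div, mul_div_cancel_left₀ _ hmz]

lemma sum_mul_sum_mul_sub_eq (hsym : ∀ x y, μ x y = μ y x) (hnn : ∀ x y, 0 ≤ μ x y)
    (u : V → ℝ) :
    ∑ x ∈ Ω, u x * ∑ y, μ x y * (u y - u x) =
      ∑ x ∈ Ω, ∑ y ∈ bdry μ Ω, μ x y * (u x * u y) -
        ((∑ x ∈ Ω, ∑ y ∈ Ω, μ x y * (u x - u y) ^ 2) / 2 +
          ∑ x ∈ Ω, ∑ y ∈ bdry μ Ω, μ x y * u x ^ 2) := by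
  have hsplit : ∑ x ∈ Ω, u x * ∑ y, μ x y * (u y - u x) =
      ∑ x ∈ Ω, ∑ y ∈ Ω, μ x y * (u x * (u y - u x)) +
        ∑ x ∈ Ω, ∑ y ∈ bdry μ Ω, μ x y * (u x * (u y - u x)) := by
    rw [← sum_add_distrib]
    refine sum_congr rfl fun x hx => ?_
    calc u x * ∑ y, μ x y * (u y - u x) = ∑ y, μ x y * (u x * (u y - u x)) := by
          rw [mul_sum]; exact sum_congr rfl fun _ _ => by ring
      _ = _ := sum_eq_sum_add_sum_bdry hsym hnn hx _
  have hswap : ∑ x ∈ Ω, ∑ y ∈ Ω, μ x y * (u x * (u y - u x)) =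
      ∑ x ∈ Ω, ∑ y ∈ Ω, μ x y * (u y * (u x - u y)) := by
    rw [sum_comm]
    exact sum_congr rfl fun x _ => sum_congr rfl fun y _ => by rw [hsym]
  have hinterior : ∑ x ∈ Ω, ∑ y ∈ Ω, μ x y * (u x - u y) ^ 2 =
      -(∑ x ∈ Ω, ∑ y ∈ Ω, μ x y * (u x * (u y - u x)) +
        ∑ x ∈ Ω, ∑ y ∈ Ω, μ x y * (u y * (u x - u y))) := by
    simp only [← sum_add_distrib, ← sum_neg_distrib]
    exact sum_congr rfl fun x _ => sum_congr rfl fun y _ => by ring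
  have hboundary : ∑ x ∈ Ω, ∑ y ∈ bdry μ Ω, μ x y * (u x * (u y - u x)) =
      ∑ x ∈ Ω, ∑ y ∈ bdry μ Ω, μ x y * (u x * u y) -
        ∑ x ∈ Ω, ∑ y ∈ bdry μ Ω, μ x y * u x ^ 2 := by
    simp only [← sum_sub_distrib]
    exact sum_congr rfl fun x _ => sum_congr rfl fun y _ => by ring
  linarith

lemma eq_zero_of_tilAdj (hsym : ∀ x y, μ x y = μ y x) (hconn : TilConnected μ Ω)
    {z₀ : V} (hz₀ : z₀ ∈ bdry μ Ω) {u : V → ℝ}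
    (hint : ∀ x ∈ Ω, ∀ y ∈ Ω, 0 < μ x y → u x = u y)
    (hbdry : ∀ x ∈ Ω, ∀ y ∈ bdry μ Ω, 0 < μ x y → u x = 0) :
    ∀ x ∈ Ω, u x = 0 := by
  intro x hx
  induction hconn x (mem_union_left _ hx) z₀ (mem_union_right _ hz₀)
    using Relation.ReflTransGen.head_induction_on with
  | refl => exact absurd hx (notMem_of_mem_bdry hz₀)
  | @head a c hac _ ih =>
    by_cases hc : c ∈ Ω
    · rw [hint a hx c hc hac.1]
      exact ih hc
    · exact hbdry a hx c (mem_bdry_of_pos hsym hx hc hac.1) hac.1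

lemma IsHarmonic.sum_mul_sub_eq_zero (hm : ∀ x ∈ clos μ Ω, 0 < vm μ Ω x) {u : V → ℝ}
    (hu : IsHarmonic μ Ω u) {x : V} (hx : x ∈ Ω) : ∑ y, μ x y * (u y - u x) = 0 :=
  (div_eq_zero_iff.mp (hu x hx)).resolve_right (hm x (mem_union_left _ hx)).ne'

lemma IsHarmonic.eq_zero_of_sum_sum_bdry_eq_zero (hsym : ∀ x y, μ x y = μ y x)
    (hnn : ∀ x y, 0 ≤ μ x y) (hm : ∀ x ∈ clos μ Ω, 0 < vm μ Ω x) (hconn : TilConnected μ Ω)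
    {z₀ : V} (hz₀ : z₀ ∈ bdry μ Ω) {u : V → ℝ} (hu : IsHarmonic μ Ω u)
    (hcross : ∑ x ∈ Ω, ∑ y ∈ bdry μ Ω, μ x y * (u x * u y) = 0) :
    ∀ x ∈ Ω, u x = 0 := by
  have hE₁ : ∀ x ∈ Ω, ∀ y ∈ Ω, 0 ≤ μ x y * (u x - u y) ^ 2 :=
    fun x _ y _ => mul_nonneg (hnn x y) (sq_nonneg _)
  have hE₂ : ∀ x ∈ Ω, ∀ y ∈ bdry μ Ω, 0 ≤ μ x y * u x ^ 2 :=
    fun x _ y _ => mul_nonneg (hnn x y) (sq_nonneg _)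
  have henergy := sum_mul_sum_mul_sub_eq (Ω := Ω) hsym hnn u
  rw [sum_eq_zero fun x hx => by rw [hu.sum_mul_sub_eq_zero hm hx, mul_zero], hcross] at henergy
  have h₁ := sum_nonneg fun x hx => sum_nonneg (hE₁ x hx)
  have h₂ := sum_nonneg fun x hx => sum_nonneg (hE₂ x hx)
  have hint := (sum_sum_eq_zero_iff_of_nonneg hE₁).mp (by linarith)
  have hbdry := (sum_sum_eq_zero_iff_of_nonneg hE₂).mp (by linarith)
  refine eq_zero_of_tilAdj hsym hconn hz₀ (fun x hx y hy hxy => ?_) fun x hx y hy hxy => ?_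
  · have hsq := (mul_eq_zero.mp (hint x hx y hy)).resolve_left hxy.ne'
    exact sub_eq_zero.mp (pow_eq_zero_iff two_ne_zero |>.mp hsq)
  · have hsq := (mul_eq_zero.mp (hbdry x hx y hy)).resolve_left hxy.ne'
    exact pow_eq_zero_iff two_ne_zero |>.mp hsq

lemma IsHarmonic.forall_nderiv_eq_iff (hsym : ∀ x y, μ x y = μ y x) (hnn : ∀ x y, 0 ≤ μ x y)
    (hm : ∀ x ∈ clos μ Ω, 0 < vm μ Ω x) (hconn : TilConnected μ Ω)
    {z₀ : V} (hz₀ : z₀ ∈ bdry μ Ω) {φ u : V → ℝ} (hu : IsHarmonic μ Ω u)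
    (hbv : ∀ z ∈ bdry μ Ω, u z = φ z) :
    (∀ z ∈ bdry μ Ω, nderiv μ Ω u z = φ z) ↔ ∀ x ∈ Ω, u x = 0 := by
  have hpointwise : ∀ z ∈ bdry μ Ω, nderiv μ Ω u z = φ z ↔ ∑ x ∈ Ω, μ z x * u x = 0 := by
    intro z hz
    have hmz := (hm z (mem_union_right _ hz)).ne'
    rw [nderiv_of_mem_bdry u hz hmz, ← hbv z hz, sub_eq_self, div_eq_zero_iff, or_iff_left hmz]
  rw [forall₂_congr hpointwise]
  refine ⟨fun hN => hu.eq_zero_of_sum_sum_bdry_eq_zero hsym hnn hm hconn hz₀ ?_,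
    fun h0 z _ => sum_eq_zero fun x hx => by rw [h0 x hx, mul_zero]⟩
  rw [sum_comm]
  refine sum_eq_zero fun y hy => ?_
  calc ∑ x ∈ Ω, μ x y * (u x * u y) = (∑ x ∈ Ω, μ y x * u x) * u y := by
        rw [sum_mul]; exact sum_congr rfl fun x _ => by rw [hsym]; ring
    _ = 0 := by rw [hN y hy, zero_mul]

lemma IsHarmonic.forall_sum_bdry_div_eq_zero_iff (hsym : ∀ x y, μ x y = μ y x)
    (hnn : ∀ x y, 0 ≤ μ x y) (hm : ∀ x ∈ clos μ Ω, 0 < vm μ Ω x) (hconn : TilConnected μ Ω)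
    {z₀ : V} (hz₀ : z₀ ∈ bdry μ Ω) {φ u : V → ℝ} (hu : IsHarmonic μ Ω u)
    (hbv : ∀ z ∈ bdry μ Ω, u z = φ z) :
    (∀ x ∈ bdryI μ Ω, (∑ y ∈ bdry μ Ω, μ x y * φ y) / vm μ Ω x = 0) ↔ ∀ x ∈ Ω, u x = 0 := by
  have hφ : ∀ x, ∑ y ∈ bdry μ Ω, μ x y * φ y = ∑ y ∈ bdry μ Ω, μ x y * u y :=
    fun x => sum_congr rfl fun y hy => by rw [hbv y hy]
  have hQ : (∀ x ∈ bdryI μ Ω, (∑ y ∈ bdry μ Ω, μ x y * φ y) / vm μ Ω x = 0) ↔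
      ∀ x ∈ Ω, ∑ y ∈ bdry μ Ω, μ x y * u y = 0 := by
    simp only [hφ]
    refine ⟨fun h x hx => ?_, fun h x hxI => by rw [h x (mem_filter.mp hxI).1, zero_div]⟩
    by_cases hxI : x ∈ bdryI μ Ω
    · exact (div_eq_zero_iff.mp (h x hxI)).resolve_right (hm x (mem_union_left _ hx)).ne'
    · exact sum_bdry_eq_zero_of_notMem_bdryI hnn hx hxI u
  rw [hQ]
  refine ⟨fun h => hu.eq_zero_of_sum_sum_bdry_eq_zero hsym hnn hm hconn hz₀ ?_, fun h0 x hx => ?_⟩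
  · refine sum_eq_zero fun x hx => ?_
    calc ∑ y ∈ bdry μ Ω, μ x y * (u x * u y) = u x * ∑ y ∈ bdry μ Ω, μ x y * u y := by
          rw [mul_sum]; exact sum_congr rfl fun y _ => by ring
      _ = 0 := by rw [h x hx, mul_zero]
  · have hharm := hu.sum_mul_sub_eq_zero hm hx
    rw [sum_eq_sum_add_sum_bdry hsym hnn hx,
      sum_eq_zero fun y hy => by rw [h0 y hy, h0 x hx, sub_self, mul_zero], zero_add] at hharm
    simpa [h0 x hx] using hharm

end Graph

/-- Proposition 3.6(2): the eigenspace E₁(Λ) of the DtN operator for the eigenvalue 1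
equals the kernel of Q, where Qφ(x) = (1/m_x) Σ_{y∈δΩ} μ_{xy} φ(y) for x ∈ δ_IΩ. -/
theorem stmt_12 (μ : V → V → ℝ) (Ω : Finset V)
    (hsym : ∀ x y, μ x y = μ y x) (hnn : ∀ x y, 0 ≤ μ x y)
    (hm : ∀ x ∈ clos μ Ω, 0 < vm μ Ω x) (hconn : TilConnected μ Ω) :
    ∀ φ u : V → ℝ, IsHarmonic μ Ω u → (∀ z ∈ bdry μ Ω, u z = φ z) →
      ((∀ z ∈ bdry μ Ω, nderiv μ Ω u z = φ z) ↔
        (∀ x ∈ bdryI μ Ω, (∑ y ∈ bdry μ Ω, μ x y * φ y) / vm μ Ω x = 0)) := by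
  intro φ u hu hbv
  rcases (bdry μ Ω).eq_empty_or_nonempty with hδ | ⟨z₀, hz₀⟩
  · simp [hδ, bdryI]
  · rw [hu.forall_nderiv_eq_iff hsym hnn hm hconn hz₀ hbv,
      hu.forall_sum_bdry_div_eq_zero_iff hsym hnn hm hconn hz₀ hbv]
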